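/- arXiv:math/0003146 — 3 statements merged into one kernel-verified Lean document; each statement's English description precedes it below -/
import Mathlib

section
/- Define the q-commutator [u, e_i]_{a} = u e_i − a e_i u, and for a monomial u = e_{i_1}...e_{i_{p-1}} set a(u,i) = q_{i i_1}...q_{i i_{p-1}}. Then for all indices i, j and all homogeneous monomials u, ∂_j([u, e_i]_{a(u,i)}) = [∂_j u, e_i]_{a(u,i) q_{ji}}. -/
open scoped BigOperators

noncomputable section

/-- The free unital ℂ-algebra on `N` generators, realized as the monoid algebra
of the free monoid on `Fin N`. -/
abbrev FA (N : ℕ) : Type := MonoidAlgebra ℂ (FreeMonoid (Fin N))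

/-- The generator `e i`. -/
def gen {N : ℕ} (i : Fin N) : FA N :=
  MonoidAlgebra.of ℂ (FreeMonoid (Fin N)) (FreeMonoid.of i)

/-- The monomial `e_{i₁} ⋯ e_{iₙ}` attached to a word. -/
def mono {N : ℕ} (w : List (Fin N)) : FA N :=
  MonoidAlgebra.of ℂ (FreeMonoid (Fin N)) (FreeMonoid.ofList w)

/-- The q-differential on monomials: `∂ᵢ(e_j x) = δᵢⱼ x + qᵢⱼ e_j ∂ᵢ x`, `∂ᵢ 1 = 0`. -/
def Dword {N : ℕ} (q : Fin N → Fin N → ℂ) (i : Fin N) : List (Fin N) → FA N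
  | [] => 0
  | j :: w => (if i = j then mono w else 0) + q i j • (gen j * Dword q i w)

/-- The q-differential operator `∂ᵢ`, extended linearly from monomials. -/
def D {N : ℕ} (q : Fin N → Fin N → ℂ) (i : Fin N) (x : FA N) : FA N :=
  Finsupp.sum x.coeff fun w c => c • Dword q i (FreeMonoid.toList w)


/-- The commutation factor `a(u, i) = ∏_{r} q_{i i_r}` for a monomial `u = e_{i₁}⋯e_{iₚ₋₁}`. -/
def afac {N : ℕ} (q : Fin N → Fin N → ℂ) (i : Fin N) (w : List (Fin N)) : ℂ :=
  (w.map (q i)).prod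

/-- The q-commutator `[u, eᵢ]_a = u eᵢ − a eᵢ u`. -/
def qcomm {N : ℕ} (u : FA N) (i : Fin N) (a : ℂ) : FA N :=
  u * gen i - a • (gen i * u)

/-! On monomials `∂_j` obeys the twisted Leibniz rule
`∂_j(u x) = (∂_j u) x + a(u,j) u ∂_j x`. Applied to `u eᵢ` and to `eᵢ u` it gives
`∂_j [u, eᵢ]_{a(u,i)} = [∂_j u, eᵢ]_{a(u,i) q_{ji}} + δ_{ij} (a(u,j) - a(u,i)) u`,
and the correction term vanishes: it is present only when `i = j`, where `a(u,j) = a(u,i)`. -/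

namespace FA

variable {N : ℕ} (q : Fin N → Fin N → ℂ)

@[simp]
lemma mono_nil : mono ([] : List (Fin N)) = 1 := rfl

lemma mono_append (w v : List (Fin N)) : mono (w ++ v) = mono w * mono v := by
  simp [mono]

lemma mono_cons (i : Fin N) (w : List (Fin N)) : mono (i :: w) = gen i * mono w :=
  mono_append [i] w

lemma mono_singleton (i : Fin N) : mono [i] = gen i := rfl

lemma qcomm_mono (w : List (Fin N)) (i : Fin N) (a : ℂ) :
    qcomm (mono w) i a = mono (w ++ [i]) - a • mono (i :: w) := by
  rw [qcomm, mono_append, mono_singleton, mono_cons]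

lemma D_mono (j : Fin N) (w : List (Fin N)) : D q j (mono w) = Dword q j w := by
  rw [D, mono, MonoidAlgebra.of_apply, MonoidAlgebra.single,
    Finsupp.sum_single_index (by simp), one_smul]
  rfl

lemma D_sub (j : Fin N) (x y : FA N) : D q j (x - y) = D q j x - D q j y := by
  rw [D, MonoidAlgebra.coeff_sub, Finsupp.sum_sub_index (fun _ _ _ => sub_smul ..)]
  rfl

lemma D_smul (j : Fin N) (c : ℂ) (x : FA N) : D q j (c • x) = c • D q j x := by
  rw [D, D, MonoidAlgebra.coeff_smul, Finsupp.sum_smul_index (by simp), Finsupp.smul_sum]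
  simp only [mul_smul]

lemma Dword_singleton (j i : Fin N) : Dword q j [i] = if j = i then 1 else 0 := by
  simp [Dword]

lemma Dword_append (j : Fin N) (w v : List (Fin N)) :
    Dword q j (w ++ v) = Dword q j w * mono v + afac q j w • (mono w * Dword q j v) := by
  induction w with
  | nil => simp [Dword, afac]
  | cons k w ih =>
    simp only [List.cons_append, Dword, ih, afac, List.map_cons, List.prod_cons, mono_cons,
      mono_append]
    split_ifs <;> simp only [mul_add, add_mul, smul_add, mul_smul, mul_smul_comm, smul_mul_assoc,
      mul_assoc, zero_add, add_assoc]

lemma Dword_concat (j i : Fin N) (w : List (Fin N)) :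
    Dword q j (w ++ [i]) = Dword q j w * gen i + if j = i then afac q j w • mono w else 0 := by
  rw [Dword_append, Dword_singleton, mono_singleton]
  split_ifs <;> simp

end FA

open FA in
theorem D_qcomm_general {N : ℕ} (q : Fin N → Fin N → ℂ)
    (i j : Fin N) (w : List (Fin N)) :
    D q j (qcomm (mono w) i (afac q i w)) =
      qcomm (D q j (mono w)) i (afac q i w * q j i) := by
  rw [qcomm_mono, D_sub, D_smul, D_mono, D_mono, D_mono, Dword_concat, Dword, qcomm]
  rcases eq_or_ne j i with rfl | hji
  · simp only [if_true, smul_add, mul_smul]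
    abel
  · simp only [hji, if_false, add_zero, zero_add, mul_smul]

/-- `∂_j [u, eᵢ]_{a(u,i)} = [∂_j u, eᵢ]_{a(u,i) q_{ji}}` for every monomial `u`. -/
theorem D_qcomm {N : ℕ} (q : Fin N → Fin N → ℂ) (hq : ∀ i j, q i j ≠ 0)
    (i j : Fin N) (w : List (Fin N)) :
    D q j (qcomm (mono w) i (afac q i w)) =
      qcomm (D q j (mono w)) i (afac q i w * q j i) :=
  D_qcomm_general q i j w
end
end

section
/- With X^{i_1...i_n} the iterated q-commutators as above, ∂_{i_1} X^{i_1 i_2 ... i_n} = (1 − q_{i_1 i_2} q_{i_2 i_1}) Y^{i_2...i_n}, where Y^{i_2} = e_{i_2} and Y^{i_2...i_p} = [Y^{i_2...i_{p-1}}, e_{i_p}]_{b(i_2...i_p)} with b(i_2...i_p) = q_{i_1 i_p} · a(i_1 i_2 ... i_p). (Here a(i_1...i_p) = ∏_{r<p} q_{i_p i_r}.) -/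
open scoped BigOperators

noncomputable section

/-- Iterated q-commutators `X^{i₁...iₚ}` (recursion on the reversed index list), with
commutation factors `a(i₁...iₚ) = ∏_{r<p} q_{iₚ i_r}`. -/
def Xrev {N : ℕ} (q : Fin N → Fin N → ℂ) : List (Fin N) → FA N
  | [] => 1
  | [j] => gen j
  | j :: w => Xrev q w * gen j - ((w.map (q j)).prod) • (gen j * Xrev q w)

def Xiter {N : ℕ} (q : Fin N → Fin N → ℂ) (l : List (Fin N)) : FA N :=
  Xrev q l.reverse

/-- The modified iterated commutators `Y^{i₂...iₚ}` (relative to the removed first index `j`),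
with commutation factors `b_j(i₂...iₚ) = q_{j iₚ} a(j i₂...iₚ) = q_{j iₚ} q_{iₚ j} ∏_{2≤r<p} q_{iₚ i_r}`. -/
def Yrev {N : ℕ} (q : Fin N → Fin N → ℂ) (j : Fin N) : List (Fin N) → FA N
  | [] => 1
  | [i] => gen i
  | i :: w => Yrev q j w * gen i - (q j i * q i j * (w.map (q i)).prod) • (gen i * Yrev q j w)

def Yiter {N : ℕ} (q : Fin N → Fin N → ℂ) (j : Fin N) (l : List (Fin N)) : FA N :=
  Yrev q j l.reverse

/-!
`∂ᵢ` is a twisted derivation: `∂ᵢ(e_j x) = δᵢⱼ x + qᵢⱼ e_j ∂ᵢ x` and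
`∂ᵢ(x e_j) = (∂ᵢ x) e_j + δᵢⱼ σᵢ(x)`, where `σᵢ = twist q i` is the
algebra endomorphism `e_k ↦ qᵢₖ e_k`.
Hence `∂ᵢ [x, e_j]_c = [∂ᵢ x, e_j]_{c qᵢⱼ} + δᵢⱼ (σᵢ x - c x)`. Every `X^{i₁...iₚ}` is a
`σᵢ`-eigenvector with eigenvalue `∏_r q_{i i_r}`, which for `i = iₚ₊₁` is exactly the next
commutation factor, so the correction term always vanishes. Thus `∂_{i₁}` turns the tower of
commutators defining `X^{i₁...iₙ}` into the one defining `Y^{i₂...iₙ}`, starting from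
`∂_{i₁}(e_{i₁} e_{i₂} - q_{i₂ i₁} e_{i₂} e_{i₁}) = (1 - q_{i₁ i₂} q_{i₂ i₁}) e_{i₂}`.
-/

section

variable {N : ℕ} (q : Fin N → Fin N → ℂ) (i j : Fin N)

lemma mono_nil : mono ([] : List (Fin N)) = 1 := rfl

lemma gen_eq_mono : gen j = mono [j] := rfl

lemma mono_cons (w : List (Fin N)) : mono (j :: w) = gen j * mono w := by
  simp [mono, gen]

lemma mono_append_singleton (w : List (Fin N)) : mono (w ++ [j]) = mono w * gen j := by
  simp [mono, gen]

lemma single_eq_smul_mono (a : FreeMonoid (Fin N)) (b : ℂ) :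
    (MonoidAlgebra.single a b : FA N) = b • mono a.toList := by
  rw [mono, FreeMonoid.ofList_toList, MonoidAlgebra.of_apply, MonoidAlgebra.smul_single,
    smul_eq_mul, mul_one]

lemma D_eq_linearCombination (x : FA N) :
    D q i x = Finsupp.linearCombination ℂ (fun w => Dword q i w.toList) x.coeff := rfl

lemma D_add (x y : FA N) : D q i (x + y) = D q i x + D q i y := by
  simp only [D_eq_linearCombination, MonoidAlgebra.coeff_add, map_add]

lemma D_sub (x y : FA N) : D q i (x - y) = D q i x - D q i y := by
  simp only [D_eq_linearCombination, MonoidAlgebra.coeff_sub, map_sub]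

lemma D_smul (c : ℂ) (x : FA N) : D q i (c • x) = c • D q i x := by
  simp only [D_eq_linearCombination, MonoidAlgebra.coeff_smul, map_smul]

lemma D_mono (w : List (Fin N)) : D q i (mono w) = Dword q i w := by
  rw [D_eq_linearCombination]
  change Finsupp.linearCombination ℂ _ (Finsupp.single (FreeMonoid.ofList w) 1) = _
  rw [Finsupp.linearCombination_single, one_smul, FreeMonoid.toList_ofList]

lemma D_gen_self : D q i (gen i) = 1 := by
  simp [gen_eq_mono, D_mono, Dword, mono_nil]

def twist : FA N →ₐ[ℂ] FA N :=
  MonoidAlgebra.lift ℂ (FA N) (FreeMonoid (Fin N)) (FreeMonoid.lift fun k => q i k • gen k)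

lemma twist_gen : twist q i (gen j) = q i j • gen j := by
  simp [twist, gen]

lemma twist_mono (w : List (Fin N)) : twist q i (mono w) = (w.map (q i)).prod • mono w := by
  induction w with
  | nil => simp [mono_nil]
  | cons k w ih =>
    rw [mono_cons, map_mul, twist_gen, ih]
    simp [smul_smul, mul_comm]

lemma Dword_append_singleton (w : List (Fin N)) :
    Dword q i (w ++ [j]) =
      Dword q i w * gen j + if i = j then (w.map (q i)).prod • mono w else 0 := by
  induction w with
  | nil => simp [Dword, mono]
  | cons k w ih =>
    rw [List.cons_append, Dword, Dword, ih]
    by_cases h : i = k <;> by_cases h' : i = j <;>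
      simp [h, h', mono_append_singleton, mono_cons, add_mul, mul_add, smul_add, smul_smul,
        mul_assoc] <;> abel

lemma D_gen_mul (x : FA N) :
    D q i (gen j * x) = (if i = j then x else 0) + q i j • (gen j * D q i x) := by
  induction x using MonoidAlgebra.induction_linear with
  | zero => simp [D_eq_linearCombination]
  | add x y hx hy =>
    rw [mul_add, D_add, hx, hy, D_add, mul_add, smul_add]
    split_ifs <;> abel
  | single a b =>
    rw [single_eq_smul_mono, mul_smul_comm, ← mono_cons, D_smul, D_smul, D_mono, D_mono, Dword]
    split_ifs <;> simp [smul_add, smul_smul, mul_comm]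

lemma D_mul_gen (x : FA N) :
    D q i (x * gen j) = D q i x * gen j + if i = j then twist q i x else 0 := by
  induction x using MonoidAlgebra.induction_linear with
  | zero => simp [D_eq_linearCombination]
  | add x y hx hy =>
    rw [add_mul, D_add, hx, hy, D_add, map_add, add_mul]
    split_ifs <;> abel
  | single a b =>
    rw [single_eq_smul_mono, smul_mul_assoc, ← mono_append_singleton, D_smul, D_smul,
      D_mono, D_mono, Dword_append_singleton, map_smul, twist_mono]
    split_ifs <;> simp [smul_add, smul_smul]

lemma D_qcommutator_gen (c : ℂ) (x : FA N) :
    D q i (x * gen j - c • (gen j * x)) =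
      D q i x * gen j - (c * q i j) • (gen j * D q i x)
        + if i = j then twist q i x - c • x else 0 := by
  rw [D_sub, D_smul, D_mul_gen, D_gen_mul]
  split_ifs <;> module

lemma Xrev_cons {w : List (Fin N)} (hw : w ≠ []) :
    Xrev q (j :: w) = Xrev q w * gen j - (w.map (q j)).prod • (gen j * Xrev q w) := by
  obtain ⟨k, w, rfl⟩ := List.exists_cons_of_ne_nil hw
  rfl

lemma Yrev_cons {w : List (Fin N)} (hw : w ≠ []) :
    Yrev q i (j :: w) =
      Yrev q i w * gen j - (q i j * q j i * (w.map (q j)).prod) • (gen j * Yrev q i w) := by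
  obtain ⟨k, w, rfl⟩ := List.exists_cons_of_ne_nil hw
  rfl

lemma twist_Xrev (w : List (Fin N)) : twist q i (Xrev q w) = (w.map (q i)).prod • Xrev q w := by
  induction w with
  | nil => simp [Xrev]
  | cons k w ih =>
    rcases eq_or_ne w [] with rfl | hw
    · simp [Xrev, twist_gen]
    rw [Xrev_cons q k hw, map_sub, map_mul, map_smul, map_mul, ih, twist_gen]
    simp only [List.map_cons, List.prod_cons, smul_sub, smul_smul, smul_mul_assoc,
      mul_smul_comm]
    congr 2; ring

lemma D_Xrev_cons {w : List (Fin N)} (hw : w ≠ []) :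
    D q i (Xrev q (j :: w)) =
      D q i (Xrev q w) * gen j - ((w.map (q j)).prod * q i j) • (gen j * D q i (Xrev q w)) := by
  rw [Xrev_cons q j hw, D_qcommutator_gen]
  split_ifs with h
  · rw [h, twist_Xrev, sub_self, add_zero]
  · rw [add_zero]

lemma D_Xrev_append_pair (w : List (Fin N)) :
    D q i (Xrev q (w ++ [j, i])) = (1 - q i j * q j i) • Yrev q i (w ++ [j]) := by
  induction w with
  | nil =>
    simp only [List.nil_append]
    rw [D_Xrev_cons q i j (List.cons_ne_nil i []), Xrev, D_gen_self, Yrev]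
    simp only [List.map_cons, List.map_nil, List.prod_cons, List.prod_nil, one_mul, mul_one]
    module
  | cons k w ih =>
    simp only [List.cons_append]
    rw [D_Xrev_cons q i k (by simp), ih, Yrev_cons q i k (by simp)]
    simp only [List.map_append, List.prod_append, List.map_cons, List.map_nil, List.prod_cons,
      List.prod_nil, smul_mul_assoc, mul_smul_comm]
    module

end

theorem D_Xiter_head_general {N : ℕ} (q : Fin N → Fin N → ℂ)
    (i₁ i₂ : Fin N) (l : List (Fin N)) :
    D q i₁ (Xiter q (i₁ :: i₂ :: l)) =
      (1 - q i₁ i₂ * q i₂ i₁) • Yiter q i₁ (i₂ :: l) := by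
  have hX : (i₁ :: i₂ :: l).reverse = l.reverse ++ [i₂, i₁] := by simp
  have hY : (i₂ :: l).reverse = l.reverse ++ [i₂] := by simp
  rw [Xiter, Yiter, hX, hY, D_Xrev_append_pair]

/-- `∂_{i₁} X^{i₁ i₂ ... iₙ} = (1 − q_{i₁ i₂} q_{i₂ i₁}) Y^{i₂...iₙ}`. -/
theorem D_Xiter_head {N : ℕ} (q : Fin N → Fin N → ℂ) (hq : ∀ i j, q i j ≠ 0)
    (i₁ i₂ : Fin N) (l : List (Fin N)) :
    D q i₁ (Xiter q (i₁ :: i₂ :: l)) =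
      (1 - q i₁ i₂ * q i₂ i₁) • Yiter q i₁ (i₂ :: l) :=
  D_Xiter_head_general q i₁ i₂ l
end
end

section
/- Substitution lemma: let φ : {1,...,n} → {1,...,k} be a surjection with |φ^{-1}(i)| = n_i, and set q'_{i'j'} := q_{φ(i')φ(j')}. Let B' be the free algebra on e'_1,...,e'_n with parameters q' and B the free algebra on e_1,...,e_k with parameters q, and let Φ : B' → B be the algebra map e'_{i'} ↦ e_{φ(i')}. Then Φ intertwines the differentials: ∂_i ∘ Φ = Φ ∘ (Σ_{i' ∈ φ^{-1}(i)} ∂'_{i'}) on B'. In particular, if C' ∈ B' is a constant, then Φ(C') is a constant in B. -/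
open scoped BigOperators

noncomputable section

/-- The substitution homomorphism `Φ : B' → B`, `e'_{i'} ↦ e_{φ(i')}`. -/
def Phi {n k : ℕ} (φ : Fin n → Fin k) (x : FA n) : FA k :=
  MonoidAlgebra.ofCoeff (Finsupp.mapDomain (FreeMonoid.map φ) x.coeff)

/-! Both sides of the intertwining identity are linear in `x`, so it suffices to check it on
monomials. There it follows by induction on the word from `∂ᵢ(e_j x) = δᵢⱼ x + qᵢⱼ e_j ∂ᵢ x`:
summing `∂'_{i'}` over the fibre `φ⁻¹(i)` turns `δ_{i'j'}` into `δ_{i,φ(j')}`, and the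
coefficient `q'_{i'j'} = q_{i,φ(j')}` does not depend on the choice of `i'` in the fibre. -/

section Substitution

variable {n k : ℕ} (φ : Fin n → Fin k)

def phiAlgHom : FA n →ₐ[ℂ] FA k :=
  MonoidAlgebra.mapDomainAlgHom ℂ ℂ (FreeMonoid.map φ)

lemma Phi_eq_phiAlgHom : Phi φ = phiAlgHom φ := rfl

lemma phiAlgHom_mono (w : List (Fin n)) : phiAlgHom φ (mono w) = mono (w.map φ) := by
  simp only [phiAlgHom, mono, MonoidAlgebra.mapDomainAlgHom_apply, MonoidAlgebra.of_apply,
    MonoidAlgebra.mapDomain_single]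
  rfl

lemma phiAlgHom_gen (j : Fin n) : phiAlgHom φ (gen j) = gen (φ j) :=
  phiAlgHom_mono φ [j]

end Substitution

section Linear

variable {N : ℕ} (q : Fin N → Fin N → ℂ) (i : Fin N)

def dLinearMap : FA N →ₗ[ℂ] FA N :=
  Finsupp.lsum ℂ (fun w => LinearMap.smulRight LinearMap.id (Dword q i (FreeMonoid.toList w))) ∘ₗ
    (MonoidAlgebra.coeffLinearEquiv ℂ).toLinearMap

lemma D_eq_dLinearMap : D q i = dLinearMap q i := by
  ext x
  simp [D, dLinearMap]

lemma dLinearMap_single (w : FreeMonoid (Fin N)) (c : ℂ) :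
    dLinearMap q i (MonoidAlgebra.single w c) = c • Dword q i w.toList := by
  simp [dLinearMap]

end Linear

section Intertwining

variable {n k : ℕ} (φ : Fin n → Fin k) (q : Fin k → Fin k → ℂ) (i : Fin k)

lemma Dword_map (w : List (Fin n)) :
    Dword q i (w.map φ) =
      phiAlgHom φ (∑ i' ∈ Finset.univ.filter (φ · = i),
        Dword (fun a b => q (φ a) (φ b)) i' w) := by
  induction w with
  | nil => simp [Dword]
  | cons j w ih =>
    simp only [List.map_cons, Dword, map_sum, map_add, Finset.sum_add_distrib]
    congr 1
    · simp only [apply_ite, map_zero, phiAlgHom_mono]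
      rw [Finset.sum_ite_eq']
      simp [eq_comm]
    · rw [ih, map_sum, Finset.mul_sum, Finset.smul_sum]
      refine Finset.sum_congr rfl fun i' hi' => ?_
      simp [phiAlgHom_gen, (Finset.mem_filter.1 hi').2]

lemma dLinearMap_comp_phiAlgHom :
    dLinearMap q i ∘ₗ (phiAlgHom φ).toLinearMap =
      (phiAlgHom φ).toLinearMap ∘ₗ
        ∑ i' ∈ Finset.univ.filter (φ · = i), dLinearMap (fun a b => q (φ a) (φ b)) i' := by
  refine MonoidAlgebra.lhom_ext' fun w => LinearMap.ext fun c => ?_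
  simp [dLinearMap_single, phiAlgHom, Dword_map, Finset.smul_sum]

lemma D_Phi (x : FA n) :
    D q i (Phi φ x) =
      Phi φ (∑ i' ∈ Finset.univ.filter (φ · = i), D (fun a b => q (φ a) (φ b)) i' x) := by
  simpa [D_eq_dLinearMap, Phi_eq_phiAlgHom] using
    LinearMap.congr_fun (dLinearMap_comp_phiAlgHom φ q i) x

end Intertwining

theorem substitution_lemma_general {n k : ℕ} (φ : Fin n → Fin k)
    (q : Fin k → Fin k → ℂ) :
    (∀ (i : Fin k) (x : FA n),
      D q i (Phi φ x) =
        Phi φ (∑ i' ∈ Finset.univ.filter (fun i' => φ i' = i),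
          D (fun i' j' => q (φ i') (φ j')) i' x)) ∧
    (∀ C : FA n, (∀ i', D (fun i' j' => q (φ i') (φ j')) i' C = 0) →
      ∀ i, D q i (Phi φ C) = 0) := by
  refine ⟨D_Phi φ q, fun C hC i => ?_⟩
  rw [D_Phi, Finset.sum_eq_zero fun i' _ => hC i', Phi_eq_phiAlgHom, map_zero]

/-- substitution lemma: let `φ` be a surjection with fibres of cardinalities
`m i`, and `q'_{i'j'} := q_{φ(i')φ(j')}`.  Then `Φ` intertwines the differentials:
`∂ᵢ ∘ Φ = Φ ∘ (Σ_{i' ∈ φ⁻¹(i)} ∂'_{i'})`; in particular constants map to constants. -/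
theorem substitution_lemma {n k : ℕ} (φ : Fin n → Fin k) (hφ : Function.Surjective φ)
    (m : Fin k → ℕ) (hm : ∀ i, Nat.card {i' : Fin n // φ i' = i} = m i)
    (q : Fin k → Fin k → ℂ) (hq : ∀ i j, q i j ≠ 0) :
    (∀ (i : Fin k) (x : FA n),
      D q i (Phi φ x) =
        Phi φ (∑ i' ∈ Finset.univ.filter (fun i' => φ i' = i),
          D (fun i' j' => q (φ i') (φ j')) i' x)) ∧
    (∀ C : FA n, (∀ i', D (fun i' j' => q (φ i') (φ j')) i' C = 0) →
      ∀ i, D q i (Phi φ C) = 0) :=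
  substitution_lemma_general φ q
end
end
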